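/- arXiv:2107.10918 — 2 statements merged into one kernel-verified Lean document; each statement's English description precedes it below -/
import Mathlib

section
/- Let N be a positive integer. For every primitive vector v ∈ ℤ³ there exist a positive divisor d of N, a matrix γ ∈ Γ₀(N,3)′, and a sign s ∈ {1,−1} such that γ·v = s·(d,1,0)ᵀ. Moreover d is uniquely determined by v: if d and d′ are positive divisors of N and some elements of Γ₀(N,3)′ carry v to ±(d,1,0)ᵀ and to ±(d′,1,0)ᵀ respectively, then d = d′. (Equivalently, the Γ₀(N,3)′-orbits of lines in ℚ³ are in one-to-one correspondence with the positive divisors of N, the line for d being spanned by (d,1,0)ᵀ.) -/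
/-- Membership in `Γ₀(N,3)′`: an element of `SL₃(ℤ)` whose `(1,2)` and `(1,3)` entries
(`1`-indexed), i.e. the entries `(0,1)` and `(0,2)` in `0`-indexed notation, are divisible
by `N`. -/
def InGamma0' (N : ℕ) (γ : Matrix.SpecialLinearGroup (Fin 3) ℤ) : Prop :=
  (N : ℤ) ∣ (γ : Matrix (Fin 3) (Fin 3) ℤ) 0 1 ∧
  (N : ℤ) ∣ (γ : Matrix (Fin 3) (Fin 3) ℤ) 0 2

/-- `γ` carries the vector `v` to `± w`. -/
def CarriesTo (γ : Matrix.SpecialLinearGroup (Fin 3) ℤ) (v w : Fin 3 → ℤ) : Prop :=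
  ∃ s : ℤ, (s = 1 ∨ s = -1) ∧ (γ : Matrix (Fin 3) (Fin 3) ℤ).mulVec v = s • w


/-!
The orbit invariant is `gcd(v₀, N)`. The first row of `γ ∈ Γ₀(N,3)′` is `(a, N b, N c)`, and
expanding `det γ = 1` along it shows that `a` is prime to `N`; hence `(γ v)₀ ≡ a v₀ (mod N)` has
the same gcd with `N` as `v₀`, and for `±(d, 1, 0)` with `d ∣ N` this gcd is `d`.

Conversely, modulo `N` we have `v₀ ≡ u d` with `u` a unit and `d ∣ N`. An `SL₂(ℤ)` move on the
last two coordinates brings a primitive `v` to `(v₀, g, 0)` with `g` prime to `v₀`, then to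
`(v₀, 0, 1)`, and a matrix whose first row is `(u⁻¹, N, N c)` sends this to `(d, 1, 0)`.
-/

open Matrix MulAction
open scoped MatrixGroups

theorem MulAction.mem_orbit_trans {G α : Type*} [Group G] [MulAction G α] {a b c : α}
    (hab : b ∈ orbit G a) (hbc : c ∈ orbit G b) : c ∈ orbit G a :=
  orbit_eq_iff.mpr hab ▸ hbc

namespace Matrix

variable {R : Type*} [CommRing R]

theorem det_fin_three_of (a b c d e f g h i : R) :
    (!![a, b, c; d, e, f; g, h, i]).det =
      a * e * i - a * f * h - b * d * i + b * f * g + c * d * h - c * e * g :=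
  det_fin_three _

theorem mulVec_fin_three_of (a b c d e f g h i x y z : R) :
    !![a, b, c; d, e, f; g, h, i] *ᵥ ![x, y, z] =
      ![a * x + b * y + c * z, d * x + e * y + f * z, g * x + h * y + i * z] := by
  ext j
  fin_cases j <;> simp [mulVec, add_assoc]

end Matrix

theorem isCoprime_gcd_of_univ_gcd_eq_one {v : Fin 3 → ℤ} (hv : Finset.univ.gcd v = 1) :
    IsCoprime (v 0) (gcd (v 1) (v 2)) := by
  have h : gcd (v 0) (gcd (v 1) (v 2)) ∣ Finset.univ.gcd v := Finset.dvd_gcd fun i _ => by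
    fin_cases i
    exacts [gcd_dvd_left _ _, (gcd_dvd_right _ _).trans (gcd_dvd_left _ _),
      (gcd_dvd_right _ _).trans (gcd_dvd_right _ _)]
  rw [hv] at h
  exact (gcd_isUnit_iff _ _).mp (isUnit_of_dvd_one h)

theorem Int.exists_dvd_isCoprime_mul_add_mul_eq (N : ℕ) (x : ℤ) :
    ∃ d : ℕ, d ∣ N ∧ ∃ a c : ℤ, IsCoprime a N ∧ a * x + N * c = d := by
  obtain ⟨d, hd, _, ⟨u, rfl⟩, hx⟩ := ZMod.eq_unit_mul_divisor (x : ZMod N)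
  obtain ⟨a, ha⟩ := ZMod.intCast_surjective (u⁻¹ : (ZMod N)ˣ).val
  have hax : ((a * x : ℤ) : ZMod N) = ((d : ℤ) : ZMod N) := by
    push_cast
    rw [ha, hx, ← mul_assoc, Units.inv_mul, one_mul]
  obtain ⟨c, hc⟩ := (ZMod.intCast_eq_intCast_iff_dvd_sub _ _ _).mp hax
  refine ⟨d, hd, a, c, ?_, by linear_combination -hc⟩
  rw [isCoprime_comm, ← ZMod.coe_int_isUnit_iff_isCoprime, ha]
  exact Units.isUnit _

def Gamma0' (N : ℕ) : Subgroup SL(3, ℤ) where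
  carrier := {γ | InGamma0' N γ}
  mul_mem' := by
    rintro γ δ ⟨hγ₁, hγ₂⟩ ⟨hδ₁, hδ₂⟩
    show (N : ℤ) ∣ ((γ : Matrix (Fin 3) (Fin 3) ℤ) * δ) 0 1 ∧
      (N : ℤ) ∣ ((γ : Matrix (Fin 3) (Fin 3) ℤ) * δ) 0 2
    simp only [mul_apply, Fin.sum_univ_three]
    exact ⟨dvd_add (dvd_add (hδ₁.mul_left _) (hγ₁.mul_right _)) (hγ₂.mul_right _),
      dvd_add (dvd_add (hδ₂.mul_left _) (hγ₁.mul_right _)) (hγ₂.mul_right _)⟩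
  one_mem' := by simp [InGamma0']
  inv_mem' := by
    rintro γ ⟨h₁, h₂⟩
    show (N : ℤ) ∣ adjugate (γ : Matrix (Fin 3) (Fin 3) ℤ) 0 1 ∧
      (N : ℤ) ∣ adjugate (γ : Matrix (Fin 3) (Fin 3) ℤ) 0 2
    simp only [adjugate_fin_three, of_apply, cons_val', cons_val_zero, cons_val_one, cons_val_two,
      empty_val', cons_val_fin_one]
    constructor <;>
      apply_rules [dvd_add, dvd_sub, dvd_neg.mpr, dvd_mul_of_dvd_left, dvd_mul_of_dvd_right]

namespace Gamma0'

variable {N : ℕ}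

theorem mem_orbit_of_mulVec_eq {v w : Fin 3 → ℤ} (m : Matrix (Fin 3) (Fin 3) ℤ) (hm : m.det = 1)
    (h₁ : (N : ℤ) ∣ m 0 1) (h₂ : (N : ℤ) ∣ m 0 2) (hw : m *ᵥ v = w) :
    w ∈ orbit (Gamma0' N) v :=
  ⟨⟨⟨m, hm⟩, h₁, h₂⟩, hw⟩

theorem isCoprime_apply_zero_zero {γ : SL(3, ℤ)} (hγ : γ ∈ Gamma0' N) : IsCoprime (γ 0 0) N := by
  have ⟨⟨b, hb⟩, c, hc⟩ : InGamma0' N γ := hγ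
  have hdet := γ.det_coe
  rw [det_fin_three] at hdet
  refine ⟨γ 1 1 * γ 2 2 - γ 1 2 * γ 2 1,
    c * (γ 1 0 * γ 2 1 - γ 1 1 * γ 2 0) - b * (γ 1 0 * γ 2 2 - γ 1 2 * γ 2 0), ?_⟩
  linear_combination hdet + (γ 1 0 * γ 2 2 - γ 1 2 * γ 2 0) * hb -
    (γ 1 0 * γ 2 1 - γ 1 1 * γ 2 0) * hc

theorem gcd_apply_zero_of_mem_orbit {v w : Fin 3 → ℤ} (h : w ∈ orbit (Gamma0' N) v) :
    Int.gcd (w 0) N = Int.gcd (v 0) N := by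
  obtain ⟨⟨γ, hγ⟩, rfl⟩ := mem_orbit_iff.mp h
  have hcop := Int.isCoprime_iff_gcd_eq_one.mp (isCoprime_apply_zero_zero hγ)
  have ⟨⟨b, hb⟩, c, hc⟩ : InGamma0' N γ := hγ
  have hw : ((γ : Matrix (Fin 3) (Fin 3) ℤ) *ᵥ v) 0 = γ 0 0 * v 0 + N * (b * v 1 + c * v 2) := by
    simp only [mulVec, dotProduct, Fin.sum_univ_three, hb, hc]
    ring
  change Int.gcd (((γ : Matrix (Fin 3) (Fin 3) ℤ) *ᵥ v) 0) N = _
  rw [hw, Int.gcd_add_mul_left_left, Int.gcd_mul_right_left_of_gcd_eq_one hcop]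

theorem vec3_gcd_mem_orbit (x y z : ℤ) : ![x, gcd y z, 0] ∈ orbit (Gamma0' N) ![x, y, z] := by
  by_cases hg : gcd y z = 0
  · obtain ⟨rfl, rfl⟩ := (gcd_eq_zero_iff y z).mp hg
    rw [hg]
    exact mem_orbit_self _
  obtain ⟨a, b, hab⟩ := isCoprime_div_gcd_div_gcd_of_gcd_ne_zero hg
  have hy := EuclideanDomain.mul_div_cancel' hg (gcd_dvd_left y z)
  have hz := EuclideanDomain.mul_div_cancel' hg (gcd_dvd_right y z)
  refine mem_orbit_of_mulVec_eq !![1, 0, 0; 0, a, b; 0, -(z / gcd y z), y / gcd y z]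
    (by rw [det_fin_three_of]; linear_combination hab) (dvd_zero _) (dvd_zero _) ?_
  rw [mulVec_fin_three_of]
  exact vec3_eq (by ring) (by linear_combination -a * hy - b * hz + gcd y z * hab)
    (by linear_combination z / gcd y z * hy - y / gcd y z * hz)

theorem vec3_zero_one_mem_orbit {x g : ℤ} (h : IsCoprime x g) :
    ![x, 0, 1] ∈ orbit (Gamma0' N) ![x, g, 0] := by
  obtain ⟨p, q, hpq⟩ := h
  refine mem_orbit_of_mulVec_eq !![1, 0, 0; -g * p, 1 - g * q, -g; p, q, 1]
    (by rw [det_fin_three_of]; ring) (dvd_zero _) (dvd_zero _) ?_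
  rw [mulVec_fin_three_of]
  exact vec3_eq (by ring) (by linear_combination -g * hpq) (by linear_combination hpq)

theorem vec3_one_zero_mem_orbit {x a c d : ℤ} (ha : IsCoprime a N) (hd : a * x + N * c = d) :
    ![d, 1, 0] ∈ orbit (Gamma0' N) ![x, 0, 1] := by
  obtain ⟨p, q, hpq⟩ := ha
  -- the determinant is `p a + q N`; the last two rows send `(x, 0, 1)` to `(1, 0)`
  refine mem_orbit_of_mulVec_eq !![a, N, N * c; -q, p, 1 + q * x; q, -p, -q * x]
    (by rw [det_fin_three_of]; linear_combination hpq) (dvd_refl _) (dvd_mul_right _ _) ?_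
  rw [mulVec_fin_three_of]
  exact vec3_eq (by linear_combination hd) (by ring) (by ring)

theorem exists_divisor_mem_orbit {v : Fin 3 → ℤ} (hv : Finset.univ.gcd v = 1) :
    ∃ d : ℕ, d ∣ N ∧ ![(d : ℤ), 1, 0] ∈ orbit (Gamma0' N) v := by
  obtain ⟨d, hd, a, c, ha, hac⟩ := Int.exists_dvd_isCoprime_mul_add_mul_eq N (v 0)
  have hv₃ : v = ![v 0, v 1, v 2] := by
    ext i
    fin_cases i <;> rfl
  rw [hv₃]
  exact ⟨d, hd, mem_orbit_trans (vec3_gcd_mem_orbit _ _ _) <|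
    mem_orbit_trans (vec3_zero_one_mem_orbit (isCoprime_gcd_of_univ_gcd_eq_one hv))
      (vec3_one_zero_mem_orbit ha hac)⟩

theorem eq_gcd_of_carriesTo {γ : SL(3, ℤ)} (hγ : InGamma0' N γ) {v : Fin 3 → ℤ} {d : ℕ}
    (hd : d ∣ N) (h : CarriesTo γ v ![(d : ℤ), 1, 0]) : d = Int.gcd (v 0) N := by
  obtain ⟨s, hs, hγv⟩ := h
  rw [← gcd_apply_zero_of_mem_orbit ⟨⟨γ, hγ⟩, hγv⟩]
  rcases hs with rfl | rfl <;> simp [Nat.gcd_eq_left hd]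

end Gamma0'

/-- **Statement 4.** For every primitive `v ∈ ℤ³` there are a positive divisor `d` of `N`,
a matrix `γ ∈ Γ₀(N,3)′` and a sign `s` with `γ · v = s • (d,1,0)ᵀ`; moreover `d` is uniquely
determined by `v`. -/
theorem stmt_4 (N : ℕ) (hN : 0 < N) :
    (∀ v : Fin 3 → ℤ, Finset.univ.gcd v = 1 →
      ∃ d : ℕ, 0 < d ∧ d ∣ N ∧ ∃ γ, InGamma0' N γ ∧ CarriesTo γ v ![(d : ℤ), 1, 0]) ∧
    (∀ v : Fin 3 → ℤ, Finset.univ.gcd v = 1 →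
      ∀ d d' : ℕ, 0 < d → d ∣ N → 0 < d' → d' ∣ N →
      (∃ γ, InGamma0' N γ ∧ CarriesTo γ v ![(d : ℤ), 1, 0]) →
      (∃ γ, InGamma0' N γ ∧ CarriesTo γ v ![(d' : ℤ), 1, 0]) → d = d') := by
  constructor
  · intro v hv
    obtain ⟨d, hd, ⟨γ, hγ⟩, hγv⟩ := Gamma0'.exists_divisor_mem_orbit (N := N) hv
    exact ⟨d, Nat.pos_of_dvd_of_pos hd hN, hd, γ, hγ, 1, .inl rfl, by rw [one_smul]; exact hγv⟩
  · rintro v - d d' - hd - hd' ⟨γ, hγ, hγv⟩ ⟨γ', hγ', hγ'v⟩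
    rw [Gamma0'.eq_gcd_of_carriesTo hγ hd hγv, Gamma0'.eq_gcd_of_carriesTo hγ' hd' hγ'v]
end

section
/- Let p be an odd prime. Then the number of orbits of Γ₀(p²)^± acting on the projective line ℙ¹(ℚ) equals (p + 3)/2. -/
/-- The projective line `ℙ¹(ℚ)`: the set of `1`-dimensional `ℚ`-subspaces of `ℚ²`. -/
def ProjLineQ : Type := {L : Submodule ℚ (Fin 2 → ℚ) // Module.finrank ℚ L = 1}

/-- The orbit relation on `ℙ¹(ℚ)` for the group `Γ₀(M)^±` of integer matrices of
determinant `±1` whose `(2,1)` entry is divisible by `M`. -/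
def relGamma0PM (M : ℕ) (L L' : ProjLineQ) : Prop :=
  ∃ g : Matrix (Fin 2) (Fin 2) ℤ, (g.det = 1 ∨ g.det = -1) ∧ (M : ℤ) ∣ g 1 0 ∧
    Submodule.map (Matrix.mulVecLin (g.map ((↑) : ℤ → ℚ))) L.1 = L'.1

/-!
Every point of `ℙ¹(ℚ)` is the line through a primitive vector `(a, c) ∈ ℤ²`, unique up to sign.
For `g ∈ Γ₀(p²)^±` the condition `p ∣ c` is preserved, and when `c = p c₁` the residue of `a c₁`
modulo `p` gets multiplied by `det g ≡ ±1`; so `(a c₁)² mod p`, or `none` when `p ∤ c`, is an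
orbit invariant. Conversely, the unimodular matrices sending `v` to `w` are
`A_w * !![1, t; 0, ±1] * A_v⁻¹` with `A_v ∈ SL₂(ℤ)` of first column `v`, and when the invariants
agree `t` and the sign can be chosen so that `p²` divides the lower-left entry. The invariant takes
the value `none` and every square of `ZMod p`, of which there are `(p + 1) / 2`.
-/

open Matrix Submodule

theorem FiniteField.ncard_range_sq {F : Type*} [Field F] [Fintype F] (hF : ringChar F ≠ 2) :
    (Set.range fun x : F => x ^ 2).ncard = (Fintype.card F + 1) / 2 := by
  classical
  have hsq : (Set.range fun x : F => x ^ 2) =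
      insert 0 (Units.val '' ((powMonoidHom 2 : Fˣ →* Fˣ).range : Set Fˣ)) := by
    ext y
    constructor
    · rintro ⟨x, rfl⟩
      rcases eq_or_ne x 0 with rfl | hx
      · simp
      · exact Or.inr ⟨Units.mk0 x hx ^ 2, ⟨_, rfl⟩, by simp⟩
    · rintro (rfl | ⟨_, ⟨u, rfl⟩, rfl⟩)
      · exact ⟨0, zero_pow two_ne_zero⟩
      · exact ⟨u, by simp⟩
  have hodd := FiniteField.odd_card_of_char_ne_two hF
  rw [hsq, Set.ncard_insert_of_notMem (by simp), Set.ncard_image_of_injective _ Units.val_injective,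
    ← Nat.card_coe_set_eq, SetLike.coe_sort_coe, IsCyclic.card_powMonoidHom_range,
    Nat.card_eq_fintype_card, Fintype.card_units,
    Nat.gcd_eq_right (by omega : 2 ∣ Fintype.card F - 1)]
  omega

def IsPrimitiveVec (v : Fin 2 → ℤ) : Prop := IsCoprime (v 0) (v 1)

namespace IsPrimitiveVec

variable {v w : Fin 2 → ℤ}

lemma ne_zero (hv : IsPrimitiveVec v) : v ≠ 0 := by
  rintro rfl
  exact not_isCoprime_zero_zero hv

lemma mulVec {g : Matrix (Fin 2) (Fin 2) ℤ} (hdet : g.det = 1 ∨ g.det = -1)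
    (hv : IsPrimitiveVec v) : IsPrimitiveVec (g *ᵥ v) := by
  obtain ⟨x, y, hxy⟩ := hv
  have hdet' : g.det * g.det = 1 := by rcases hdet with h | h <;> simp [h]
  rw [det_fin_two] at hdet'
  refine ⟨g.det * (x * g 1 1 - y * g 1 0), g.det * (y * g 0 0 - x * g 0 1), ?_⟩
  simp only [Matrix.mulVec, dotProduct, Fin.sum_univ_two]
  rw [det_fin_two]
  linear_combination (g 0 0 * g 1 1 - g 0 1 * g 1 0) ^ 2 * hxy + hdet'

lemma eq_or_eq_neg_of_smul_eq (hv : IsPrimitiveVec v) (hw : IsPrimitiveVec w) {m n : ℤ}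
    (hn : n ≠ 0) (h : n • v = m • w) : v = w ∨ v = -w := by
  have habs : n.natAbs = m.natAbs := by
    have := congrArg (fun u : Fin 2 → ℤ => Int.gcd (u 0) (u 1)) h
    simpa [Int.gcd_mul_left, Int.isCoprime_iff_gcd_eq_one.mp hv,
      Int.isCoprime_iff_gcd_eq_one.mp hw] using this
  rcases Int.natAbs_eq_natAbs_iff.mp habs with rfl | rfl
  · exact Or.inl (smul_right_injective _ hn h)
  · refine Or.inr (smul_right_injective _ hn ?_)
    simp only [h, smul_neg, neg_smul, neg_neg]

lemma exists_smul_eq {w : Fin 2 → ℤ} (hw : w ≠ 0) :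
    ∃ u, IsPrimitiveVec u ∧ ∃ g : ℤ, g ≠ 0 ∧ w = g • u := by
  have hgcd : 0 < Int.gcd (w 0) (w 1) := by
    refine Int.gcd_pos_iff.mpr (not_and_or.mp fun h0 => hw ?_)
    ext i; fin_cases i <;> simp [h0.1, h0.2]
  obtain ⟨g, a, b, hg, hab, ha, hb⟩ := Int.exists_gcd_one' hgcd
  refine ⟨![a, b], Int.isCoprime_iff_gcd_eq_one.mpr hab, g, by positivity, ?_⟩
  ext i; fin_cases i <;> simp [ha, hb, mul_comm]

end IsPrimitiveVec

abbrev lineThrough (v : Fin 2 → ℤ) : Submodule ℚ (Fin 2 → ℚ) :=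
  span ℚ {((↑) ∘ v : Fin 2 → ℚ)}

lemma map_lineThrough (g : Matrix (Fin 2) (Fin 2) ℤ) (v : Fin 2 → ℤ) :
    (lineThrough v).map (g.map ((↑) : ℤ → ℚ)).mulVecLin = lineThrough (g *ᵥ v) := by
  rw [map_span, Set.image_singleton, mulVecLin_apply]
  congr 3
  ext i
  exact (RingHom.map_mulVec (Int.castRingHom ℚ) g v i).symm

lemma IsPrimitiveVec.finrank_lineThrough {v : Fin 2 → ℤ} (hv : IsPrimitiveVec v) :
    Module.finrank ℚ (lineThrough v) = 1 :=
  finrank_span_singleton fun h => hv.ne_zero (funext fun i => by simpa using congrFun h i)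

lemma IsPrimitiveVec.eq_or_eq_neg_of_lineThrough_eq {v w : Fin 2 → ℤ} (hv : IsPrimitiveVec v)
    (hw : IsPrimitiveVec w) (h : lineThrough v = lineThrough w) : v = w ∨ v = -w := by
  have hvw : ((↑) ∘ v : Fin 2 → ℚ) ∈ lineThrough w := h ▸ mem_span_singleton_self _
  obtain ⟨q, hq⟩ := mem_span_singleton.mp hvw
  refine hv.eq_or_eq_neg_of_smul_eq hw (n := q.den) (m := q.num) (by exact_mod_cast q.den_nz) ?_
  ext i
  have hi := congrFun hq i
  simp only [Pi.smul_apply, Function.comp_apply, smul_eq_mul] at hi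
  have : (q.den : ℚ) * v i = q.num * w i := by
    rw [← hi, ← mul_assoc, mul_comm (q.den : ℚ), Rat.mul_den_eq_num]
  simp only [Pi.smul_apply, smul_eq_mul]
  exact_mod_cast this

lemma ProjLineQ.exists_primitive (L : ProjLineQ) :
    ∃ v, IsPrimitiveVec v ∧ L.1 = lineThrough v := by
  have hL : L.1 ≠ ⊥ := fun h => by
    have := L.2
    rw [h, finrank_bot] at this
    exact zero_ne_one this
  obtain ⟨x, hxL, hx⟩ := exists_mem_ne_zero_of_ne_bot hL
  obtain ⟨b, hb⟩ := IsLocalization.exist_integer_multiples_of_finite (nonZeroDivisors ℤ) x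
  choose w hw using hb
  have hwx : ((↑) ∘ w : Fin 2 → ℚ) = (b : ℚ) • x := by
    ext i; simpa using hw i
  have hw0 : w ≠ 0 := by
    rintro rfl
    exact hx (by simpa using hwx.symm)
  obtain ⟨u, hu, g, hg, rfl⟩ := IsPrimitiveVec.exists_smul_eq hw0
  have hux : ((↑) ∘ u : Fin 2 → ℚ) = ((g : ℚ)⁻¹ * b) • x := by
    rw [mul_smul, ← hwx]
    ext i; simp [hg]
  refine ⟨u, hu, eq_span_singleton_of_mem_of_finrank_eq_one L.2 ?_ ?_⟩
  · rw [hux]; exact L.1.smul_mem _ hxL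
  · exact fun h => hu.ne_zero (funext fun i => by simpa using congrFun h i)

section CuspInvariant

variable {p : ℕ} {v w : Fin 2 → ℤ}

def cuspInvariant (p : ℕ) (v : Fin 2 → ℤ) : Option (ZMod p) :=
  if (p : ℤ) ∣ v 1 then some (((v 0 * (v 1 / p) : ℤ) : ZMod p) ^ 2) else none

lemma cuspInvariant_of_eq_mul (hp : p ≠ 0) {c : ℤ} (hc : v 1 = p * c) :
    cuspInvariant p v = some (((v 0 * c : ℤ) : ZMod p) ^ 2) := by
  rw [cuspInvariant, if_pos ⟨c, hc⟩, hc, Int.mul_ediv_cancel_left _ (by exact_mod_cast hp)]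

lemma cuspInvariant_of_not_dvd (h : ¬ (p : ℤ) ∣ v 1) : cuspInvariant p v = none :=
  if_neg h

lemma cuspInvariant_neg (v : Fin 2 → ℤ) : cuspInvariant p (-v) = cuspInvariant p v := by
  simp only [cuspInvariant, Pi.neg_apply, dvd_neg]
  split_ifs with h
  · rw [Int.neg_ediv_of_dvd h, neg_mul_neg]
  · rfl

lemma cuspInvariant_mulVec (hp : p.Prime) {g : Matrix (Fin 2) (Fin 2) ℤ}
    (hdet : g.det = 1 ∨ g.det = -1) (hg : (p : ℤ) ^ 2 ∣ g 1 0) (v : Fin 2 → ℤ) :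
    cuspInvariant p (g *ᵥ v) = cuspInvariant p v := by
  have : Fact p.Prime := ⟨hp⟩
  obtain ⟨t, ht⟩ := hg
  have h0 : (g *ᵥ v) 0 = g 0 0 * v 0 + g 0 1 * v 1 := by
    simp [Matrix.mulVec, dotProduct, Fin.sum_univ_two]
  have h1 : (g *ᵥ v) 1 = p * (p * t * v 0) + g 1 1 * v 1 := by
    simp [Matrix.mulVec, dotProduct, Fin.sum_univ_two, ht]
    ring
  have hdiag : ((g 0 0 * g 1 1 : ℤ) : ZMod p) ^ 2 = 1 := by
    have hsq : ((g.det : ℤ) : ZMod p) ^ 2 = 1 := by rcases hdet with h | h <;> simp [h]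
    rw [det_fin_two, ht] at hsq
    push_cast at hsq ⊢
    simpa using hsq
  by_cases hv : (p : ℤ) ∣ v 1
  · obtain ⟨c, hc⟩ := hv
    rw [cuspInvariant_of_eq_mul hp.ne_zero hc,
      cuspInvariant_of_eq_mul hp.ne_zero (c := p * t * v 0 + g 1 1 * c) (by rw [h1, hc]; ring),
      h0, hc]
    congr 1
    push_cast at hdiag ⊢
    simp only [ZMod.natCast_self, zero_mul, mul_zero, add_zero, zero_add]
    linear_combination (v 0 * c : ZMod p) ^ 2 * hdiag
  · have hδ : ((g 1 1 : ℤ) : ZMod p) ≠ 0 := fun h => by simp [h] at hdiag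
    rw [cuspInvariant_of_not_dvd hv, cuspInvariant_of_not_dvd]
    rw [← ZMod.intCast_zmod_eq_zero_iff_dvd] at hv ⊢
    rw [h1]
    push_cast
    simpa [hδ] using hv

end CuspInvariant

lemma exists_det_eq_mulVec_eq {v w : Fin 2 → ℤ} {x y x' y' : ℤ} (hv : x * v 0 + y * v 1 = 1)
    (hw : x' * w 0 + y' * w 1 = 1) (t ε : ℤ) :
    ∃ g : Matrix (Fin 2) (Fin 2) ℤ, g.det = ε ∧
      g 1 0 = w 1 * x - ε * v 1 * x' - v 1 * w 1 * t ∧ g *ᵥ v = w := by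
  have hv' : !![x, y; -v 1, v 0] *ᵥ v = ![1, 0] := by
    ext i; fin_cases i <;> simp [Matrix.mulVec, dotProduct, Fin.sum_univ_two, hv, mul_comm]
  -- `!![x, y; -v 1, v 0]` is the inverse of `A_v = !![v 0, -y; v 1, x]`
  refine ⟨!![w 0, -y'; w 1, x'] * !![1, t; 0, ε] * !![x, y; -v 1, v 0], ?_, ?_, ?_⟩
  · simp only [det_mul, det_fin_two_of]
    linear_combination ε * (x * v 0 + y * v 1) * hw + ε * hv
  · simp [Matrix.mul_apply, Fin.sum_univ_two]
    ring
  · rw [← mulVec_mulVec, ← mulVec_mulVec, hv']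
    ext i; fin_cases i <;> simp [Matrix.mulVec, dotProduct, Fin.sum_univ_two]

lemma exists_det_eq_one_mulVec_eq_of_isCoprime {v w : Fin 2 → ℤ} (hv : IsPrimitiveVec v)
    (hw : IsPrimitiveVec w) {M : ℤ} (hvM : IsCoprime (v 1) M) (hwM : IsCoprime (w 1) M) :
    ∃ g : Matrix (Fin 2) (Fin 2) ℤ, g.det = 1 ∧ M ∣ g 1 0 ∧ g *ᵥ v = w := by
  obtain ⟨x, y, hxy⟩ := hv
  obtain ⟨x', y', hxy'⟩ := hw
  obtain ⟨X, Y, hXY⟩ := hvM.mul_left hwM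
  obtain ⟨g, hdet, hg, hgv⟩ := exists_det_eq_mulVec_eq hxy hxy' (X * (w 1 * x - v 1 * x')) 1
  refine ⟨g, hdet, ⟨(w 1 * x - v 1 * x') * Y, ?_⟩, hgv⟩
  rw [hg]
  linear_combination (-(w 1 * x - v 1 * x')) * hXY

lemma exists_det_eq_mulVec_eq_of_eq_mul {p : ℕ} {v w : Fin 2 → ℤ} (hv : IsPrimitiveVec v)
    (hw : IsPrimitiveVec w) {c c' ε : ℤ} (hc : v 1 = p * c) (hc' : w 1 = p * c')
    (hε : ε = 1 ∨ ε = -1) (h : ((v 0 * c : ℤ) : ZMod p) = ε * (w 0 * c' : ℤ)) :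
    ∃ g : Matrix (Fin 2) (Fin 2) ℤ, g.det = ε ∧ (p : ℤ) ^ 2 ∣ g 1 0 ∧ g *ᵥ v = w := by
  obtain ⟨x, y, hxy⟩ := hv
  obtain ⟨x', y', hxy'⟩ := hw
  obtain ⟨g, hdet, hg, hgv⟩ := exists_det_eq_mulVec_eq hxy hxy' 0 ε
  refine ⟨g, hdet, ?_, hgv⟩
  have hdvd : (p : ℤ) ∣ c' * x - ε * c * x' := by
    rw [← ZMod.intCast_zmod_eq_zero_iff_dvd]
    have e1 : (x * v 0 : ZMod p) = 1 := by
      simpa [hc] using congrArg (Int.cast : ℤ → ZMod p) hxy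
    have e2 : (x' * w 0 : ZMod p) = 1 := by
      simpa [hc'] using congrArg (Int.cast : ℤ → ZMod p) hxy'
    have e3 : (ε : ZMod p) ^ 2 = 1 := by rcases hε with rfl | rfl <;> simp
    push_cast at h ⊢
    linear_combination (ε * c * x') * e1 - (c' * x) * e2 - (x * x' * ε) * h
      - (x * x' * w 0 * c') * e3
  obtain ⟨s, hs⟩ := hdvd
  exact ⟨s, by rw [hg, hc, hc']; linear_combination (p : ℤ) * hs⟩

lemma exists_mulVec_eq_of_cuspInvariant_eq {p : ℕ} (hp : p.Prime) {v w : Fin 2 → ℤ}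
    (hv : IsPrimitiveVec v) (hw : IsPrimitiveVec w) (h : cuspInvariant p v = cuspInvariant p w) :
    ∃ g : Matrix (Fin 2) (Fin 2) ℤ, (g.det = 1 ∨ g.det = -1) ∧ (p : ℤ) ^ 2 ∣ g 1 0 ∧
      g *ᵥ v = w := by
  have : Fact p.Prime := ⟨hp⟩
  have hpZ : Prime (p : ℤ) := Nat.prime_iff_prime_int.mp hp
  by_cases hv1 : (p : ℤ) ∣ v 1 <;> by_cases hw1 : (p : ℤ) ∣ w 1
  · obtain ⟨c, hc⟩ := hv1
    obtain ⟨c', hc'⟩ := hw1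
    rw [cuspInvariant_of_eq_mul hp.ne_zero hc, cuspInvariant_of_eq_mul hp.ne_zero hc',
      Option.some_inj, sq_eq_sq_iff_eq_or_eq_neg] at h
    rcases h with h | h
    · obtain ⟨g, hdet, hg⟩ := exists_det_eq_mulVec_eq_of_eq_mul hv hw hc hc' (.inl rfl)
        (by simpa using h)
      exact ⟨g, .inl hdet, hg⟩
    · obtain ⟨g, hdet, hg⟩ := exists_det_eq_mulVec_eq_of_eq_mul hv hw hc hc' (.inr rfl)
        (by simpa using h)
      exact ⟨g, .inr hdet, hg⟩
  · obtain ⟨c, hc⟩ := hv1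
    simp [cuspInvariant_of_eq_mul hp.ne_zero hc, cuspInvariant_of_not_dvd hw1] at h
  · obtain ⟨c', hc'⟩ := hw1
    simp [cuspInvariant_of_eq_mul hp.ne_zero hc', cuspInvariant_of_not_dvd hv1] at h
  · obtain ⟨g, hdet, hg⟩ := exists_det_eq_one_mulVec_eq_of_isCoprime hv hw
      ((hpZ.coprime_iff_not_dvd.mpr hv1).symm.pow_right (n := 2))
      ((hpZ.coprime_iff_not_dvd.mpr hw1).symm.pow_right (n := 2))
    exact ⟨g, .inl hdet, hg⟩

noncomputable def lineInvariant (p : ℕ) (L : ProjLineQ) : Option (ZMod p) :=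
  cuspInvariant p L.exists_primitive.choose

lemma lineInvariant_eq {p : ℕ} {L : ProjLineQ} {v : Fin 2 → ℤ} (hv : IsPrimitiveVec v)
    (hL : L.1 = lineThrough v) : lineInvariant p L = cuspInvariant p v := by
  obtain ⟨hv₀, hL₀⟩ := L.exists_primitive.choose_spec
  rcases hv₀.eq_or_eq_neg_of_lineThrough_eq hv (hL₀ ▸ hL) with h | h
  · rw [lineInvariant, h]
  · rw [lineInvariant, h, cuspInvariant_neg]

lemma relGamma0PM_prime_sq_iff {p : ℕ} (hp : p.Prime) {L L' : ProjLineQ} :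
    relGamma0PM (p ^ 2) L L' ↔ lineInvariant p L = lineInvariant p L' := by
  obtain ⟨v, hv, hL⟩ := L.exists_primitive
  obtain ⟨w, hw, hL'⟩ := L'.exists_primitive
  rw [lineInvariant_eq hv hL, lineInvariant_eq hw hL', relGamma0PM, hL, hL']
  push_cast
  constructor
  · rintro ⟨g, hdet, hg, hgL⟩
    rw [map_lineThrough] at hgL
    rcases (hv.mulVec hdet).eq_or_eq_neg_of_lineThrough_eq hw hgL with h | h
    · rw [← h, cuspInvariant_mulVec hp hdet hg]
    · rw [← neg_neg w, ← h, cuspInvariant_neg, cuspInvariant_mulVec hp hdet hg]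
  · intro h
    obtain ⟨g, hdet, hg, hgv⟩ := exists_mulVec_eq_of_cuspInvariant_eq hp hv hw h
    exact ⟨g, hdet, hg, by rw [map_lineThrough, hgv]⟩

lemma range_lineInvariant {p : ℕ} (hp : p.Prime) :
    Set.range (lineInvariant p) =
      insert none (Option.some '' Set.range fun x : ZMod p => x ^ 2) := by
  have hmem (v : Fin 2 → ℤ) (hv : IsPrimitiveVec v) :
      cuspInvariant p v ∈ Set.range (lineInvariant p) :=
    ⟨⟨lineThrough v, hv.finrank_lineThrough⟩, lineInvariant_eq hv rfl⟩
  ext o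
  constructor
  · rintro ⟨L, rfl⟩
    obtain ⟨v, hv, hL⟩ := L.exists_primitive
    rw [lineInvariant_eq hv hL]
    by_cases h : (p : ℤ) ∣ v 1
    · obtain ⟨c, hc⟩ := h
      rw [cuspInvariant_of_eq_mul hp.ne_zero hc]
      exact .inr ⟨_, ⟨_, rfl⟩, rfl⟩
    · rw [cuspInvariant_of_not_dvd h]
      exact .inl rfl
  · rintro (rfl | ⟨_, ⟨x, rfl⟩, rfl⟩)
    · have hnone : cuspInvariant p ![0, 1] = none :=
        cuspInvariant_of_not_dvd (Nat.prime_iff_prime_int.mp hp).not_dvd_one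
      exact hnone ▸ hmem _ (isCoprime_zero_left.mpr isUnit_one)
    · have : NeZero p := ⟨hp.ne_zero⟩
      have hsome : cuspInvariant p ![1, p * x.val] = some (x ^ 2) := by
        rw [cuspInvariant_of_eq_mul hp.ne_zero (c := x.val) rfl]
        simp
      exact hsome ▸ hmem _ isCoprime_one_left

/-- **Statement 13.** For an odd prime `p`, the number of orbits of `Γ₀(p²)^±` on
`ℙ¹(ℚ)` equals `(p + 3) / 2`. -/
theorem stmt_13 (p : ℕ) (hp : p.Prime) (hodd : p ≠ 2) :
    Nat.card (Quot (relGamma0PM (p ^ 2))) = (p + 3) / 2 := by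
  have : Fact p.Prime := ⟨hp⟩
  have hker : relGamma0PM (p ^ 2) = (Setoid.ker (lineInvariant p)).r := by
    ext L L'
    exact relGamma0PM_prime_sq_iff hp
  have hsq := FiniteField.ncard_range_sq (F := ZMod p) (by rwa [ZMod.ringChar_zmod_n])
  rw [ZMod.card] at hsq
  rw [hker, show Nat.card (Quot _) = Nat.card (Set.range (lineInvariant p)) from
      Nat.card_congr (Setoid.quotientKerEquivRange _), Nat.card_coe_set_eq, range_lineInvariant hp,
    Set.ncard_insert_of_notMem (by simp), Set.ncard_image_of_injective _ (Option.some_injective _),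
    hsq]
  omega
end
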